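/- The normalized bending energy of the elastic two-teardrop equals C_{2T} = 32(2m_T − 1)·F(π − α(m_T), m_T)². Concretely, since the two-teardrop consists of two congruent copies of the teardrop elastica, whose wavelike parametrization γ_w(x|m_T) has speed |γ_w′(x|m_T)| = (1 − m_T sin²x)^{−1/2}, this amounts to the identity 4·(∫_{a_T}^{b_T} (1 − m_T sin²x)^{−1/2} dx)·(∫_{a_T}^{b_T} 4 m_T cos²x·(1 − m_T sin²x)^{−1/2} dx) = 32(2m_T − 1)·F(π − α(m_T), m_T)², where a_T = −π + α(m_T) and b_T = π − α(m_T). -/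

import Mathlib

open Real MeasureTheory Set

noncomputable section

abbrev E2 := EuclideanSpace ℝ (Fin 2)

/-- The point of the Euclidean plane with coordinates `(a, b)`. -/
def mkE2 (a b : ℝ) : E2 := WithLp.toLp 2 ![a, b]
/-- Incomplete elliptic integral of the first kind `F(x,m)`. -/
def Fell (x m : ℝ) : ℝ := ∫ θ in (0:ℝ)..x, 1 / Real.sqrt (1 - m * Real.sin θ ^ 2)

/-- Incomplete elliptic integral of the second kind `E(x,m)`. -/
def Eell (x m : ℝ) : ℝ := ∫ θ in (0:ℝ)..x, Real.sqrt (1 - m * Real.sin θ ^ 2)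

/-- Complete elliptic integral of the first kind `K(m)`. -/
def Kc (m : ℝ) : ℝ := Fell (Real.pi / 2) m

/-- Complete elliptic integral of the second kind `E(m)`. -/
def Ec (m : ℝ) : ℝ := Eell (Real.pi / 2) m

/-- `α(m) = arcsin √(1/(2m))`. -/
def alph (m : ℝ) : ℝ := Real.arcsin (Real.sqrt (1 / (2 * m)))

/-- `G(x,m) = ∫₀ˣ (1 − 2m sin²θ)(1 − m sin²θ)^{−1/2} dθ = 2E(x,m) − F(x,m)`. -/
def Gw (x m : ℝ) : ℝ :=
  ∫ θ in (0:ℝ)..x, (1 - 2 * m * Real.sin θ ^ 2) / Real.sqrt (1 - m * Real.sin θ ^ 2)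

/-- `f(m) = ∫₀^{π−α(m)} (1 − 2m sin²θ)(1 − m sin²θ)^{−1/2} dθ`; its unique zero is `m_T`. -/
def fT (m : ℝ) : ℝ := Gw (Real.pi - alph m) m
/-- The wavelike parametrization `γ_w(x|m) = (G(x,m), −2√m cos x)`. -/
def gammaW (m : ℝ) : ℝ → E2 := fun x => mkE2 (Gw x m) (-2 * Real.sqrt m * Real.cos x)

/-! The speed satisfies
`|γ'|² = ((1 - 2m sin²x)² + 4m sin²x (1 - m sin²x)) / (1 - m sin²x) = 1 / (1 - m sin²x)`.
All integrands are even, so integrals over `[-c, c]` are twice those over `[0, c]`, and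
`4m cos²x = (4m - 2) + 2 (1 - 2m sin²x)` expresses the bending integral through `F(c, m)` and
`G(c, m)`. At `c = π - α(m_T)` the latter is `f(m_T) = 0`, so `L = 2F` and `B = 2(4m_T - 2)F`. -/

theorem Function.Even.intervalIntegral_neg_eq_two_mul {f : ℝ → ℝ} (hf : Function.Even f) {c : ℝ}
    (hint : IntervalIntegrable f volume (-c) c) :
    ∫ x in (-c)..c, f x = 2 * ∫ x in (0:ℝ)..c, f x := by
  have hleft : ∫ x in (-c)..0, f x = ∫ x in (0:ℝ)..c, f x := by
    simpa only [hf _, neg_zero] using (intervalIntegral.integral_comp_neg (a := 0) (b := c) f).symm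
  have hzero : (0 : ℝ) ∈ uIcc (-c) c := by
    rcases le_total 0 c with hc | hc
    exacts [mem_uIcc_of_le (by linarith) hc, mem_uIcc_of_ge hc (by linarith)]
  rw [← intervalIntegral.integral_add_adjacent_intervals
    (hint.mono_set (uIcc_subset_uIcc_left hzero)) (hint.mono_set (uIcc_subset_uIcc_right hzero)),
    hleft, two_mul]

section Elliptic

variable {m : ℝ}

theorem one_sub_mul_sin_sq_pos (hm : m < 1) (x : ℝ) : 0 < 1 - m * sin x ^ 2 := by
  nlinarith [sin_sq_le_one x, sq_nonneg (sin x), mul_nonneg (sq_nonneg (sin x)) (sq_nonneg m)]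

theorem Continuous.div_sqrt_one_sub_mul_sin_sq (hm : m < 1) {g : ℝ → ℝ} (hg : Continuous g) :
    Continuous fun x => g x / √(1 - m * sin x ^ 2) :=
  hg.div (by fun_prop) fun x => (sqrt_pos.mpr (one_sub_mul_sin_sq_pos hm x)).ne'

theorem continuous_one_div_sqrt_one_sub_mul_sin_sq (hm : m < 1) :
    Continuous fun x => 1 / √(1 - m * sin x ^ 2) :=
  continuous_const.div_sqrt_one_sub_mul_sin_sq hm

theorem continuous_Gw_integrand (hm : m < 1) :
    Continuous fun x => (1 - 2 * m * sin x ^ 2) / √(1 - m * sin x ^ 2) :=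
  (by fun_prop : Continuous fun x : ℝ => 1 - 2 * m * sin x ^ 2).div_sqrt_one_sub_mul_sin_sq hm

theorem hasDerivAt_Gw (hm : m < 1) (x : ℝ) :
    HasDerivAt (fun y => Gw y m) ((1 - 2 * m * sin x ^ 2) / √(1 - m * sin x ^ 2)) x :=
  have hcont := continuous_Gw_integrand hm
  intervalIntegral.integral_hasDerivAt_right (hcont.intervalIntegrable 0 x)
    (hcont.stronglyMeasurableAtFilter _ _) hcont.continuousAt

theorem hasDerivAt_gammaW (hm : m < 1) (x : ℝ) :
    HasDerivAt (gammaW m)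
      (mkE2 ((1 - 2 * m * sin x ^ 2) / √(1 - m * sin x ^ 2)) (2 * √m * sin x)) x := by
  have hcos : HasDerivAt (fun y => -2 * √m * cos y) (2 * √m * sin x) x := by
    simpa using (hasDerivAt_cos x).const_mul (-2 * √m)
  have hsplit : ∀ a b : ℝ, mkE2 a b = a • mkE2 1 0 + b • mkE2 0 1 := fun a b => by
    ext i; fin_cases i <;> simp [mkE2]
  have hγ : gammaW m = fun y => Gw y m • mkE2 1 0 + (-2 * √m * cos y) • mkE2 0 1 :=
    funext fun y => hsplit _ _
  rw [hγ, hsplit ((1 - 2 * m * sin x ^ 2) / √(1 - m * sin x ^ 2))]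
  exact ((hasDerivAt_Gw hm x).smul_const (mkE2 1 0)).fun_add (hcos.smul_const (mkE2 0 1))

theorem norm_mkE2 (a b : ℝ) : ‖mkE2 a b‖ = √(a ^ 2 + b ^ 2) := by
  simp [EuclideanSpace.norm_eq, mkE2, Fin.sum_univ_two]

theorem norm_deriv_gammaW (hm₀ : 0 ≤ m) (hm₁ : m < 1) (x : ℝ) :
    ‖deriv (gammaW m) x‖ = 1 / √(1 - m * sin x ^ 2) := by
  have hq := one_sub_mul_sin_sq_pos hm₁ x
  rw [(hasDerivAt_gammaW hm₁ x).deriv, norm_mkE2,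
    ← sqrt_sq (by positivity : 0 ≤ 1 / √(1 - m * sin x ^ 2))]
  congr 1
  rw [div_pow, div_pow, mul_pow, mul_pow, sq_sqrt hq.le, sq_sqrt hm₀]
  field_simp
  ring

theorem integral_neg_one_div_sqrt (hm : m < 1) (c : ℝ) :
    ∫ x in (-c)..c, 1 / √(1 - m * sin x ^ 2) = 2 * Fell c m :=
  Function.Even.intervalIntegral_neg_eq_two_mul (fun x => by simp only [sin_neg, neg_sq])
    ((continuous_one_div_sqrt_one_sub_mul_sin_sq hm).intervalIntegrable _ _)

theorem integral_neg_Gw_integrand (hm : m < 1) (c : ℝ) :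
    ∫ x in (-c)..c, (1 - 2 * m * sin x ^ 2) / √(1 - m * sin x ^ 2) = 2 * Gw c m :=
  Function.Even.intervalIntegral_neg_eq_two_mul (fun x => by simp only [sin_neg, neg_sq])
    ((continuous_Gw_integrand hm).intervalIntegrable _ _)

theorem integral_neg_cos_sq_div_sqrt (hm : m < 1) (c : ℝ) :
    ∫ x in (-c)..c, 4 * m * cos x ^ 2 / √(1 - m * sin x ^ 2) =
      (4 * m - 2) * (2 * Fell c m) + 2 * (2 * Gw c m) := by
  have hsplit : ∀ x, 4 * m * cos x ^ 2 / √(1 - m * sin x ^ 2) =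
      (4 * m - 2) * (1 / √(1 - m * sin x ^ 2)) +
        2 * ((1 - 2 * m * sin x ^ 2) / √(1 - m * sin x ^ 2)) := fun x => by
    rw [cos_sq']; ring
  have hF :=
    (continuous_one_div_sqrt_one_sub_mul_sin_sq hm).intervalIntegrable (μ := volume) (-c) c
  have hG := (continuous_Gw_integrand hm).intervalIntegrable (μ := volume) (-c) c
  simp only [hsplit]
  rw [intervalIntegral.integral_add (hF.const_mul _) (hG.const_mul _),
    intervalIntegral.integral_const_mul, intervalIntegral.integral_const_mul,
    integral_neg_one_div_sqrt hm, integral_neg_Gw_integrand hm]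

end Elliptic

/-- the normalized bending energy `L · B` of the elastic two-teardrop equals
`C_{2T} = 32(2m_T − 1)F(π − α(m_T), m_T)²`.  The two-teardrop consists of two congruent copies
of the teardrop elastica `γ_w(·|m_T)|_{[a_T, b_T]}`, whose speed is
`|γ_w′(x|m_T)| = (1 − m_T sin²x)^{−1/2}`, so this amounts to the stated identity of
integrals, with `a_T = −π + α(m_T)` and `b_T = π − α(m_T)`. -/
theorem stmt19 (mT : ℝ) (hmT : mT ∈ Set.Ioo (1/2 : ℝ) 1) (hmTzero : fT mT = 0) :
    (∀ x : ℝ, ‖deriv (gammaW mT) x‖ = 1 / Real.sqrt (1 - mT * Real.sin x ^ 2)) ∧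
    4 * (∫ x in (-Real.pi + alph mT)..(Real.pi - alph mT),
          1 / Real.sqrt (1 - mT * Real.sin x ^ 2)) *
        (∫ x in (-Real.pi + alph mT)..(Real.pi - alph mT),
          4 * mT * Real.cos x ^ 2 / Real.sqrt (1 - mT * Real.sin x ^ 2)) =
      32 * (2 * mT - 1) * (Fell (Real.pi - alph mT) mT) ^ 2 := by
  obtain ⟨hm₀, hm₁⟩ := hmT
  refine ⟨norm_deriv_gammaW (by linarith) hm₁, ?_⟩
  have hGw : Gw (π - alph mT) mT = 0 := hmTzero
  rw [show -π + alph mT = -(π - alph mT) by ring, integral_neg_one_div_sqrt hm₁,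
    integral_neg_cos_sq_div_sqrt hm₁, hGw]
  ring
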